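/- arXiv:0905.4334 — 3 statements merged into one kernel-verified Lean document; each statement's English description precedes it below -/
import Mathlib

section
/- Let ξ₁,…,ξₙ be i.i.d. random variables with values in [0,1] and continuous distribution function F. Then sup_{t∈[0,1]} |Fₙ(t) − F(t)| → 0 almost surely as n → ∞ (Glivenko–Cantelli). -/
/-!
For a fixed `t`, the empirical distribution function `Fₙ(t)` is an average of the i.i.d.
indicators `1{ξₖ ≤ t}`, so the strong law of large numbers gives `Fₙ(q) → F(q)` almost surely,
simultaneously for all rationals `q`. The rest is deterministic: every `Fₙ` is monotone and `F`
is monotone and continuous, so `[0,1]` is covered by finitely many rational intervals `(p, q)`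
with `F q - F p ≤ ε`, and on such an interval `Fₙ - F` is squeezed between its values at the
endpoints up to `ε`.
-/

open MeasureTheory ProbabilityTheory Filter Topology

noncomputable def empiricalCDF {Ω : Type*} (ξ : ℕ → Ω → ℝ) (n : ℕ) (ω : Ω) (t : ℝ) : ℝ :=
  (n : ℝ)⁻¹ * ∑ k ∈ Finset.range n, if ξ k ω ≤ t then (1 : ℝ) else 0

theorem empiricalCDF_monotone {Ω : Type*} (ξ : ℕ → Ω → ℝ) (n : ℕ) (ω : Ω) :
    Monotone (empiricalCDF ξ n ω) := by
  intro a b hab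
  refine mul_le_mul_of_nonneg_left (Finset.sum_le_sum fun k _ => ?_) (by positivity)
  split_ifs with ha hb
  · exact le_rfl
  · exact absurd (ha.trans hab) hb
  · exact zero_le_one
  · exact le_rfl

theorem ae_tendsto_empiricalCDF {Ω : Type*} {mΩ : MeasurableSpace Ω} {μ : Measure Ω}
    [IsFiniteMeasure μ] {ξ : ℕ → Ω → ℝ} (hmeas : Measurable (ξ 0))
    (hindep : Pairwise fun i j => IndepFun (ξ i) (ξ j) μ)
    (hident : ∀ k, IdentDistrib (ξ k) (ξ 0) μ μ) (t : ℝ) :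
    ∀ᵐ ω ∂μ, Tendsto (fun n => empiricalCDF ξ n ω t) atTop (𝓝 (μ.real {ω | ξ 0 ω ≤ t})) := by
  set f : ℝ → ℝ := (Set.Iic t).indicator 1
  have hf : Measurable f := measurable_one.indicator measurableSet_Iic
  have hf_apply : ∀ x, f x = if x ≤ t then 1 else 0 := fun x => by
    simp only [f, Set.indicator_apply, Set.mem_Iic, Pi.one_apply]
  have hf_comp : f ∘ ξ 0 = {ω | ξ 0 ω ≤ t}.indicator 1 := by
    ext ω; simp only [Function.comp_apply, hf_apply, Set.indicator_apply, Set.mem_ofPred_eq,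
      Pi.one_apply]
  have hset : MeasurableSet {ω | ξ 0 ω ≤ t} := measurableSet_Iic.preimage hmeas
  have hint : Integrable (f ∘ ξ 0) μ := hf_comp ▸ (integrable_const 1).indicator hset
  have hslln := strong_law_ae_real (fun k => f ∘ ξ k) hint
    (fun i j hij => (hindep hij).comp hf hf) (fun k => (hident k).comp hf)
  filter_upwards [hslln] with ω hω
  rw [hf_comp, integral_indicator_one hset] at hω
  refine hω.congr fun n => ?_
  simp only [empiricalCDF, Function.comp_apply, hf_apply, div_eq_inv_mul]

theorem exists_rat_bracket {F : ℝ → ℝ} {t : ℝ} (hF : ContinuousAt F t) {ε : ℝ} (hε : 0 < ε) :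
    ∃ p q : ℚ, (p : ℝ) < t ∧ t < q ∧ F q - F p < ε := by
  obtain ⟨δ, hδ, hclose⟩ := Metric.continuousAt_iff.1 hF (ε / 2) (half_pos hε)
  obtain ⟨p, hpl, hpt⟩ := exists_rat_btwn (sub_lt_self t hδ)
  obtain ⟨q, htq, hqr⟩ := exists_rat_btwn (lt_add_of_pos_right t hδ)
  have hp := hclose (x := p) (by rw [Real.dist_eq, abs_sub_lt_iff]; constructor <;> linarith)
  have hq := hclose (x := q) (by rw [Real.dist_eq, abs_sub_lt_iff]; constructor <;> linarith)
  rw [Real.dist_eq, abs_sub_lt_iff] at hp hq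
  exact ⟨p, q, hpt, htq, by linarith [hp.2, hq.1]⟩

theorem abs_sub_le_of_monotone_of_mem_Icc {F G : ℝ → ℝ} (hF : Monotone F) (hG : Monotone G)
    {p q t ε : ℝ} (ht : t ∈ Set.Icc p q) (hp : |G p - F p| ≤ ε) (hq : |G q - F q| ≤ ε)
    (hpq : F q - F p ≤ ε) : |G t - F t| ≤ 2 * ε := by
  rw [abs_le] at hp hq ⊢
  have := hF ht.1; have := hF ht.2; have := hG ht.1; have := hG ht.2
  constructor <;> linarith

/-- Pólya's theorem on uniform convergence of monotone functions. -/
theorem tendstoUniformlyOn_of_monotone_of_tendsto_rat {ι : Type*} {l : Filter ι}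
    {G : ι → ℝ → ℝ} {F : ℝ → ℝ} {s : Set ℝ} (hs : IsCompact s) (hG : ∀ i, Monotone (G i))
    (hF : Monotone F) (hFc : ∀ t ∈ s, ContinuousAt F t)
    (hlim : ∀ q : ℚ, Tendsto (fun i => G i q) l (𝓝 (F q))) :
    TendstoUniformlyOn G F l s := by
  rw [Metric.tendstoUniformlyOn_iff]
  intro ε hε
  have hε3 : 0 < ε / 3 := by positivity
  choose p q hpt htq hpq using fun t : s => exists_rat_bracket (hFc t t.2) hε3
  obtain ⟨T, hT⟩ := hs.elim_finite_subcover (fun t : s => Set.Ioo (p t : ℝ) (q t))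
    (fun _ => isOpen_Ioo) fun t ht => Set.mem_iUnion.2 ⟨⟨t, ht⟩, hpt ⟨t, ht⟩, htq ⟨t, ht⟩⟩
  have hnear : ∀ r : ℚ, ∀ᶠ i in l, |G i r - F r| ≤ ε / 3 := fun r => by
    have h0 : Tendsto (fun i => |G i r - F r|) l (𝓝 0) := by
      simpa using ((hlim r).sub_const (F r)).abs
    exact h0.eventually_le_const hε3
  filter_upwards [(eventually_all_finset T).2 fun t _ => (hnear (p t)).and (hnear (q t))]
    with i hi x hx
  obtain ⟨t, htT, hxt⟩ := Set.mem_iUnion₂.1 (hT hx)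
  have hbound := abs_sub_le_of_monotone_of_mem_Icc hF (hG i) (Set.Ioo_subset_Icc_self hxt)
    (hi t htT).1 (hi t htT).2 (hpq t).le
  rw [dist_comm, Real.dist_eq]
  linarith

theorem TendstoUniformlyOn.tendsto_iSup_abs_sub {α ι : Type*} {l : Filter ι} {G : ι → α → ℝ}
    {F : α → ℝ} {s : Set α} (h : TendstoUniformlyOn G F l s) :
    Tendsto (fun i => ⨆ x : s, |G i x - F x|) l (𝓝 0) := by
  rw [Metric.tendsto_nhds]
  intro ε hε
  filter_upwards [Metric.tendstoUniformlyOn_iff.1 h (ε / 2) (half_pos hε)] with i hi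
  have hle : ⨆ x : s, |G i x - F x| ≤ ε / 2 :=
    Real.iSup_le (fun x => by simpa [dist_comm, Real.dist_eq] using (hi x x.2).le) (by positivity)
  rw [Real.dist_eq, sub_zero, abs_of_nonneg (Real.iSup_nonneg fun _ => abs_nonneg _)]
  linarith

theorem stmt2_general {Ω : Type*} {mΩ : MeasurableSpace Ω} (μ : Measure Ω) [IsProbabilityMeasure μ]
    (ξ : ℕ → Ω → ℝ) (hmeas : ∀ k, Measurable (ξ k))
    (hindep : iIndepFun (m := fun _ => Real.measurableSpace) ξ μ)
    (hident : ∀ k, Measure.map (ξ k) μ = Measure.map (ξ 0) μ)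
    (F : ℝ → ℝ) (hFdef : ∀ t, F t = (μ {ω | ξ 0 ω ≤ t}).toReal)
    (hFcont : Continuous F) :
    ∀ᵐ ω ∂μ,
      Tendsto (fun n : ℕ => ⨆ t : Set.Icc (0:ℝ) 1,
          |(n : ℝ)⁻¹ * (∑ k ∈ Finset.range n,
            (if ξ k ω ≤ (t : ℝ) then (1:ℝ) else 0)) - F t|)
        atTop (nhds 0) := by
  have hFmono : Monotone F := fun a b hab => by
    simp only [hFdef]
    exact measureReal_mono fun ω hω => le_trans hω hab
  have hrat : ∀ᵐ ω ∂μ, ∀ q : ℚ, Tendsto (fun n => empiricalCDF ξ n ω q) atTop (𝓝 (F q)) :=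
    ae_all_iff.2 fun q => by
      rw [hFdef]
      exact ae_tendsto_empiricalCDF (hmeas 0)
        (fun i j hij => hindep.indepFun hij)
        (fun k => ⟨(hmeas k).aemeasurable, (hmeas 0).aemeasurable, hident k⟩) (q : ℝ)
  filter_upwards [hrat] with ω hω
  exact (tendstoUniformlyOn_of_monotone_of_tendsto_rat isCompact_Icc
    (empiricalCDF_monotone ξ · ω) hFmono (fun t _ => hFcont.continuousAt) hω).tendsto_iSup_abs_sub

/-- Glivenko–Cantelli theorem: the empirical distribution function of
i.i.d. `[0,1]`-valued random variables converges to `F` uniformly, almost surely. -/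
theorem stmt2 {Ω : Type*} {mΩ : MeasurableSpace Ω} (μ : Measure Ω) [IsProbabilityMeasure μ]
    (ξ : ℕ → Ω → ℝ) (hmeas : ∀ k, Measurable (ξ k))
    (hindep : iIndepFun (m := fun _ => Real.measurableSpace) ξ μ)
    (hident : ∀ k, Measure.map (ξ k) μ = Measure.map (ξ 0) μ)
    (hval : ∀ k ω, ξ k ω ∈ Set.Icc (0:ℝ) 1)
    (F : ℝ → ℝ) (hFdef : ∀ t, F t = (μ {ω | ξ 0 ω ≤ t}).toReal)
    (hFcont : Continuous F) :
    ∀ᵐ ω ∂μ,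
      Tendsto (fun n : ℕ => ⨆ t : Set.Icc (0:ℝ) 1,
          |(n : ℝ)⁻¹ * (∑ k ∈ Finset.range n,
            (if ξ k ω ≤ (t : ℝ) then (1:ℝ) else 0)) - F t|)
        atTop (nhds 0) :=
  stmt2_general (mΩ := mΩ) μ ξ hmeas hindep hident F hFdef hFcont
end

section
/- Let F be a continuous distribution function and m a right-continuous function of bounded variation with m₀ = 0. If x satisfies the integral equation x_t = −∫₀^t x_s/(1 − F(s)) dF(s) + m_t on [0,T] with F(T) < 1, then x_t = (1 − F(t))·∫₀^t dm_s/(1 − F(s)); in particular the solution is unique. -/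
/-!
The candidate `w = (1 - F) ∫_{(0,·]} dm / (1 - F)` solves the equation by Fubini:
`∫_{(0,t]} ∫_{(0,s]} dm(u) / (1 - F u) dF(s) = ∫_{(0,t]} (F t - F u) / (1 - F u) dm(u)`,
where `F([u, t]) = F t - F u` because `F` has no atoms.

For uniqueness, the difference `y` of two solutions, divided by `1 - F`, satisfies the Gronwall
inequality `|y t| ≤ K ∫_{(0,t]} |y| dF` with `K = (1 - F T)⁻¹`. If `y` vanishes up to `c` and
`F` grows by at most `1 / (2K)` on `(c, r]`, the inequality halves every bound of `|y|` on
`(c, r]`, so `y = 0` there; by uniform continuity of `F` on `[0, T]`, finitely many such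
intervals exhaust `[0, T]`.
-/

open MeasureTheory Set Filter

lemma eqOn_zero_of_forall_abs_le_half {α : Type*} {s : Set α} {g : α → ℝ} {M : ℝ}
    (hM : ∀ r ∈ s, |g r| ≤ M)
    (hhalf : ∀ C, (∀ r ∈ s, |g r| ≤ C) → ∀ r ∈ s, |g r| ≤ C / 2) :
    EqOn g 0 s := by
  have hpow : ∀ k : ℕ, ∀ r ∈ s, |g r| ≤ M * (1 / 2) ^ k := by
    intro k
    induction k with
    | zero => simpa using hM
    | succ k ih =>
      intro r hr
      calc |g r| ≤ M * (1 / 2) ^ k / 2 := hhalf _ ih r hr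
        _ = M * (1 / 2) ^ (k + 1) := by ring
  intro r hr
  have hlim : Tendsto (fun k : ℕ => M * (1 / 2) ^ k) atTop (nhds 0) := by
    simpa using (tendsto_pow_atTop_nhds_zero_of_lt_one (by norm_num : (0 : ℝ) ≤ 1 / 2)
      (by norm_num)).const_mul M
  exact abs_nonpos_iff.1 (ge_of_tendsto' hlim fun k => hpow k r hr)

namespace StieltjesFunction

variable (F : StieltjesFunction ℝ)

lemma measureReal_Ioc {a b : ℝ} (hab : a ≤ b) : F.measure.real (Ioc a b) = F b - F a := by
  rw [measureReal_def, F.measure_Ioc, ENNReal.toReal_ofReal (sub_nonneg.2 (F.mono hab))]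

lemma measureReal_Icc_of_continuous (hF : Continuous F) {a b : ℝ} (hab : a ≤ b) :
    F.measure.real (Icc a b) = F b - F a := by
  rw [measureReal_def, F.measure_Icc,
    F.mono.continuousWithinAt_Iio_iff_leftLim_eq.1 hF.continuousAt.continuousWithinAt,
    ENNReal.toReal_ofReal (sub_nonneg.2 (F.mono hab))]

end StieltjesFunction

section Fubini

variable {ν : Measure ℝ} {f : ℝ → ℝ}

lemma integrable_indicator_Iic_prod [SFinite ν] (ρ : Measure ℝ) [IsFiniteMeasure ρ]
    (hf : Integrable f ν) :
    Integrable (fun p : ℝ × ℝ => (Iic p.1).indicator f p.2) (ρ.prod ν) := by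
  have hind : (fun p : ℝ × ℝ => (Iic p.1).indicator f p.2)
      = {p : ℝ × ℝ | p.2 ≤ p.1}.indicator (fun p => f p.2) := by
    funext p
    simp [indicator_apply]
  rw [hind]
  exact (hf.comp_snd ρ).indicator (measurableSet_le measurable_snd measurable_fst)

lemma setIntegral_Ioc_indicator_Iic {a s t : ℝ} (hst : s ≤ t) :
    ∫ u in Ioc a t, (Iic s).indicator f u ∂ν = ∫ u in Ioc a s, f u ∂ν := by
  rw [setIntegral_indicator measurableSet_Iic, Ioc_inter_Iic, min_eq_right hst]

variable [SFinite ν] {a t : ℝ}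

lemma integrableOn_Ioc_integral_Ioc (μ : Measure ℝ) [IsLocallyFiniteMeasure μ]
    (hf : IntegrableOn f (Ioc a t) ν) :
    IntegrableOn (fun s => ∫ u in Ioc a s, f u ∂ν) (Ioc a t) μ := by
  have : IsFiniteMeasure (μ.restrict (Ioc a t)) :=
    isFiniteMeasure_restrict.2 measure_Ioc_lt_top.ne
  refine (integrable_indicator_Iic_prod _ hf).integral_prod_left.congr ?_
  filter_upwards [ae_restrict_mem measurableSet_Ioc] with s hs
  exact setIntegral_Ioc_indicator_Iic hs.2

theorem StieltjesFunction.integral_Ioc_integral_Ioc (F : StieltjesFunction ℝ)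
    (hF : Continuous F) (hf : IntegrableOn f (Ioc a t) ν) :
    ∫ s in Ioc a t, (∫ u in Ioc a s, f u ∂ν) ∂F.measure
      = ∫ u in Ioc a t, (F t - F u) * f u ∂ν := by
  have : IsFiniteMeasure (F.measure.restrict (Ioc a t)) :=
    isFiniteMeasure_restrict.2 measure_Ioc_lt_top.ne
  calc ∫ s in Ioc a t, (∫ u in Ioc a s, f u ∂ν) ∂F.measure
      = ∫ s in Ioc a t, (∫ u in Ioc a t, (Iic s).indicator f u ∂ν) ∂F.measure :=
        setIntegral_congr_fun measurableSet_Ioc fun s hs =>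
          (setIntegral_Ioc_indicator_Iic hs.2).symm
    _ = ∫ u in Ioc a t, (∫ s in Ioc a t, (Iic s).indicator f u ∂F.measure) ∂ν :=
        integral_integral_swap (integrable_indicator_Iic_prod _ hf)
    _ = ∫ u in Ioc a t, (F t - F u) * f u ∂ν := by
        refine setIntegral_congr_fun measurableSet_Ioc fun u hu => ?_
        have hIcc : Ioc a t ∩ Ici u = Icc u t := by
          ext s
          simp only [mem_inter_iff, mem_Ioc, mem_Ici, mem_Icc]
          exact ⟨fun h => ⟨h.2, h.1.2⟩, fun h => ⟨⟨hu.1.trans_le h.1, h.2⟩, h.1⟩⟩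
        have hind : ∀ s, (Iic s).indicator f u = (Ici u).indicator (fun _ => f u) s := by
          intro s
          simp [indicator_apply]
        simp_rw [hind]
        rw [setIntegral_indicator measurableSet_Ici, hIcc, setIntegral_const,
          F.measureReal_Icc_of_continuous hF hu.2, smul_eq_mul]

end Fubini

namespace StieltjesFunction

variable (F : StieltjesFunction ℝ) {g : ℝ → ℝ} {a b K : ℝ}

lemma eqOn_zero_Ioc_of_abs_le_mul_integral (hK : 0 ≤ K)
    (hg : IntegrableOn g (Ioc a b) F.measure)
    (h : ∀ t ∈ Icc a b, |g t| ≤ K * ∫ s in Ioc a t, |g s| ∂F.measure)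
    {c r : ℝ} (hac : a ≤ c) (hrb : r ≤ b) (hzero : EqOn g 0 (Ioc a c))
    (hsmall : K * (F r - F c) ≤ 1 / 2) : EqOn g 0 (Ioc c r) := by
  refine eqOn_zero_of_forall_abs_le_half (M := K * ∫ s in Ioc a b, |g s| ∂F.measure) ?_ ?_
  · intro t ht
    refine (h t ⟨hac.trans ht.1.le, ht.2.trans hrb⟩).trans (mul_le_mul_of_nonneg_left ?_ hK)
    exact setIntegral_mono_set hg.abs (Eventually.of_forall fun _ => abs_nonneg _)
      (Ioc_subset_Ioc_right (ht.2.trans hrb)).eventuallyLE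
  · intro C hC t ht
    have hC0 : 0 ≤ C := (abs_nonneg _).trans (hC t ht)
    have hdrop : ∫ s in Ioc a t, |g s| ∂F.measure = ∫ s in Ioc c t, |g s| ∂F.measure :=
      setIntegral_eq_of_subset_of_forall_sdiff_eq_zero measurableSet_Ioc
        (Ioc_subset_Ioc_left hac) fun s hs => by
          simp [hzero ⟨hs.1.1, not_lt.1 fun hcs => hs.2 ⟨hcs, hs.1.2⟩⟩]
    have hbound : ∫ s in Ioc c t, |g s| ∂F.measure ≤ C * (F t - F c) := by
      have := norm_setIntegral_le_of_norm_le_const (f := fun s => |g s|) (measure_Ioc_lt_top (μ := F.measure))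
        fun s hs => (norm_abs_eq_norm (g s)).trans_le (hC s ⟨hs.1, hs.2.trans ht.2⟩)
      rw [F.measureReal_Ioc ht.1.le] at this
      exact (le_abs_self _).trans this
    calc |g t| ≤ K * ∫ s in Ioc a t, |g s| ∂F.measure := h t ⟨hac.trans ht.1.le, ht.2.trans hrb⟩
      _ ≤ K * (C * (F r - F c)) := by
        rw [hdrop]
        exact mul_le_mul_of_nonneg_left
          (hbound.trans (mul_le_mul_of_nonneg_left (by linarith [F.mono ht.2]) hC0)) hK
      _ = C * (K * (F r - F c)) := by ring
      _ ≤ C / 2 := by linarith [mul_le_mul_of_nonneg_left hsmall hC0]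

theorem eqOn_zero_of_abs_le_mul_integral (hF : Continuous F) (hK : 0 ≤ K)
    (hg : IntegrableOn g (Ioc a b) F.measure)
    (h : ∀ t ∈ Icc a b, |g t| ≤ K * ∫ s in Ioc a t, |g s| ∂F.measure) :
    EqOn g 0 (Icc a b) := by
  obtain ⟨η, hη, hmod⟩ := Metric.uniformContinuousOn_iff_le.1
    ((isCompact_Icc (a := a) (b := b)).uniformContinuousOn_of_continuous hF.continuousOn)
    (1 / (2 * (K + 1))) (by positivity)
  have hsteps : ∀ n : ℕ, ∀ t ∈ Icc a b, t ≤ a + n * η → g t = 0 := by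
    intro n
    induction n with
    | zero =>
      intro t ht hta
      obtain rfl : t = a := le_antisymm (by simpa using hta) ht.1
      simpa using h t ht
    | succ n ih =>
      intro t ht hta
      rcases le_or_gt t (a + n * η) with htc | hct
      · exact ih t ht htc
      have hac : a ≤ a + n * η := le_add_of_nonneg_right (by positivity)
      have hclose : F t - F (a + n * η) ≤ 1 / (2 * (K + 1)) := by
        have hdist := hmod t ht _ ⟨hac, hct.le.trans ht.2⟩ (by
          rw [Real.dist_eq, abs_of_pos (sub_pos.2 hct)]
          push_cast at hta
          linarith)
        exact (le_abs_self _).trans (by rwa [Real.dist_eq] at hdist)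
      refine F.eqOn_zero_Ioc_of_abs_le_mul_integral hK hg h hac ht.2
        (fun s hs => ih s ⟨hs.1.le, hs.2.trans (hct.le.trans ht.2)⟩ hs.2) ?_ ⟨hct, le_rfl⟩
      calc K * (F t - F (a + n * η)) ≤ K * (1 / (2 * (K + 1))) :=
            mul_le_mul_of_nonneg_left hclose hK
        _ ≤ 1 / 2 := by
          rw [mul_one_div, div_le_iff₀ (by positivity)]
          linarith
  intro t ht
  obtain ⟨n, hn⟩ := exists_nat_ge ((b - a) / η)
  rw [div_le_iff₀ hη] at hn
  exact hsteps n t ht (by linarith [ht.2])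

end StieltjesFunction

namespace StieltjesFunction

variable (F : StieltjesFunction ℝ)

lemma one_sub_pos_of_le {s t : ℝ} (hFt : F t < 1) (hst : s ≤ t) : 0 < 1 - F s := by
  linarith [F.mono hst]

lemma integrableOn_inv_one_sub (hF : Continuous F) {a t : ℝ} (hFt : F t < 1)
    (μ : Measure ℝ) [IsLocallyFiniteMeasure μ] :
    IntegrableOn (fun u => (1 - F u)⁻¹) (Ioc a t) μ :=
  (((continuousOn_const.sub hF.continuousOn).inv₀ fun _ hu =>
    (F.one_sub_pos_of_le hFt hu.2).ne').integrableOn_compact isCompact_Icc).mono_set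
    Ioc_subset_Icc_self

-- `dF / (1 - F)` is the cumulative hazard measure of `F`.
noncomputable def hazardSolution (μ : StieltjesFunction ℝ) (t : ℝ) : ℝ :=
  (1 - F t) * ∫ s in Ioc 0 t, (1 - F s)⁻¹ ∂μ.measure

variable {F}

lemma hazardSolution_div_one_sub (μ : StieltjesFunction ℝ) {s t : ℝ} (hFt : F t < 1)
    (hst : s ≤ t) :
    F.hazardSolution μ s / (1 - F s) = ∫ u in Ioc 0 s, (1 - F u)⁻¹ ∂μ.measure :=
  mul_div_cancel_left₀ _ (F.one_sub_pos_of_le hFt hst).ne'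

lemma integrableOn_hazardSolution_div_one_sub (hF : Continuous F) {T : ℝ} (hFT : F T < 1)
    (μ : StieltjesFunction ℝ) :
    IntegrableOn (fun s => F.hazardSolution μ s / (1 - F s)) (Ioc 0 T) F.measure :=
  (integrableOn_Ioc_integral_Ioc F.measure (F.integrableOn_inv_one_sub hF hFT μ.measure)).congr_fun
    (fun _ hs => (hazardSolution_div_one_sub μ hFT hs.2).symm) measurableSet_Ioc

theorem hazardSolution_eq (hF : Continuous F) {t : ℝ} (ht : 0 ≤ t) (hFt : F t < 1)
    (μ : StieltjesFunction ℝ) :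
    F.hazardSolution μ t
      = -(∫ s in Ioc 0 t, F.hazardSolution μ s / (1 - F s) ∂F.measure) + (μ t - μ 0) := by
  have : IsFiniteMeasure (μ.measure.restrict (Ioc 0 t)) :=
    isFiniteMeasure_restrict.2 measure_Ioc_lt_top.ne
  have hint := F.integrableOn_inv_one_sub hF (a := 0) hFt μ.measure
  have hkernel : ∫ u in Ioc 0 t, (F t - F u) * (1 - F u)⁻¹ ∂μ.measure
      = ∫ u in Ioc 0 t, (1 : ℝ) ∂μ.measure - (1 - F t) * ∫ u in Ioc 0 t, (1 - F u)⁻¹ ∂μ.measure := by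
    rw [← integral_const_mul, ← integral_sub (integrable_const 1) (hint.const_mul _)]
    refine setIntegral_congr_fun measurableSet_Ioc fun u hu => ?_
    have := (F.one_sub_pos_of_le hFt hu.2).ne'
    field_simp
    ring
  rw [setIntegral_congr_fun measurableSet_Ioc fun s hs => hazardSolution_div_one_sub μ hFt hs.2,
    F.integral_Ioc_integral_Ioc hF hint, hkernel, setIntegral_const, smul_eq_mul, mul_one,
    μ.measureReal_Ioc ht, hazardSolution]
  ring

theorem eqOn_of_integral_equation (hF : Continuous F) {T : ℝ} (hFT : F T < 1)
    {m x y : ℝ → ℝ}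
    (hxint : IntegrableOn (fun s => x s / (1 - F s)) (Ioc 0 T) F.measure)
    (hyint : IntegrableOn (fun s => y s / (1 - F s)) (Ioc 0 T) F.measure)
    (hx : ∀ t ∈ Icc 0 T, x t = -(∫ s in Ioc 0 t, x s / (1 - F s) ∂F.measure) + m t)
    (hy : ∀ t ∈ Icc 0 T, y t = -(∫ s in Ioc 0 t, y s / (1 - F s) ∂F.measure) + m t) :
    EqOn x y (Icc 0 T) := by
  set g := fun s => (x s - y s) / (1 - F s)
  have hg : IntegrableOn g (Ioc 0 T) F.measure :=
    (hxint.sub hyint).congr_fun (fun s _ => (sub_div _ _ _).symm) measurableSet_Ioc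
  have hdiff : ∀ t ∈ Icc 0 T, x t - y t = -∫ s in Ioc 0 t, g s ∂F.measure := by
    intro t ht
    have hsub : Ioc 0 t ⊆ Ioc 0 T := Ioc_subset_Ioc_right ht.2
    rw [hx t ht, hy t ht, setIntegral_congr_fun measurableSet_Ioc fun s _ => sub_div _ _ _,
      integral_sub (hxint.mono_set hsub) (hyint.mono_set hsub)]
    ring
  have hzero : EqOn g 0 (Icc 0 T) := by
    refine F.eqOn_zero_of_abs_le_mul_integral hF (inv_nonneg.2 (sub_pos.2 hFT).le) hg
      fun t ht => ?_
    have hpos := F.one_sub_pos_of_le hFT ht.2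
    calc |g t| = |∫ s in Ioc 0 t, g s ∂F.measure| * (1 - F t)⁻¹ := by
          rw [abs_div, hdiff t ht, abs_neg, abs_of_pos hpos, div_eq_mul_inv]
      _ ≤ (∫ s in Ioc 0 t, |g s| ∂F.measure) * (1 - F T)⁻¹ :=
          mul_le_mul (abs_integral_le_integral_abs)
            (inv_anti₀ (sub_pos.2 hFT) (by linarith [F.mono ht.2])) (inv_nonneg.2 hpos.le)
            (integral_nonneg fun _ => abs_nonneg _)
      _ = _ := mul_comm _ _
  intro t ht
  have hgt : (x t - y t) / (1 - F t) = 0 := hzero ht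
  rw [div_eq_zero_iff, sub_eq_zero] at hgt
  exact hgt.resolve_right (F.one_sub_pos_of_le hFT ht.2).ne'

end StieltjesFunction

theorem stmt11_general (F : StieltjesFunction ℝ) (hFcont : Continuous F)
    (T : ℝ) (hFT : F T < 1)
    (m₁ m₂ : StieltjesFunction ℝ) (m : ℝ → ℝ)
    (hm : ∀ t, m t = m₁ t - m₂ t) (hm0 : m 0 = 0)
    (x : ℝ → ℝ)
    (hxint : IntegrableOn (fun s => x s / (1 - F s)) (Set.Ioc 0 T) F.measure)
    (hx : ∀ t ∈ Set.Icc (0:ℝ) T,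
      x t = -(∫ s in Set.Ioc 0 t, x s / (1 - F s) ∂F.measure) + m t) :
    ∀ t ∈ Set.Icc (0:ℝ) T,
      x t = (1 - F t) * ((∫ s in Set.Ioc 0 t, (1 - F s)⁻¹ ∂m₁.measure)
          - ∫ s in Set.Ioc 0 t, (1 - F s)⁻¹ ∂m₂.measure) := by
  set w := fun t => F.hazardSolution m₁ t - F.hazardSolution m₂ t
  have hdiv (μ : StieltjesFunction ℝ) := F.integrableOn_hazardSolution_div_one_sub hFcont hFT μ
  have hwint : IntegrableOn (fun s => w s / (1 - F s)) (Ioc 0 T) F.measure :=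
    ((hdiv m₁).sub (hdiv m₂)).congr_fun (fun s _ => (sub_div _ _ _).symm) measurableSet_Ioc
  have hw : ∀ t ∈ Icc 0 T, w t = -(∫ s in Ioc 0 t, w s / (1 - F s) ∂F.measure) + m t := by
    intro t ht
    have hsub : Ioc 0 t ⊆ Ioc 0 T := Ioc_subset_Ioc_right ht.2
    have hFt : F t < 1 := (F.mono ht.2).trans_lt hFT
    rw [setIntegral_congr_fun measurableSet_Ioc fun s _ => sub_div _ _ _,
      integral_sub ((hdiv m₁).mono_set hsub) ((hdiv m₂).mono_set hsub)]
    linarith [StieltjesFunction.hazardSolution_eq hFcont ht.1 hFt m₁,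
      StieltjesFunction.hazardSolution_eq hFcont ht.1 hFt m₂, hm t, hm 0]
  intro t ht
  rw [mul_sub]
  exact F.eqOn_of_integral_equation hFcont hFT hxint hwint hx hw ht

/-- uniqueness/representation of the solution of the integral equation
`x_t = -∫₀^t x_s/(1-F s) dF(s) + m_t` on `[0,T]` with `F T < 1`:
`x_t = (1 - F t) ∫₀^t dm_s/(1 - F s)`, where the right-continuous bounded-variation
function `m` is written as a difference `m = m₁ - m₂` of Stieltjes functions. -/
theorem stmt11 (F : StieltjesFunction ℝ) (hFcont : Continuous F) (hF0 : F 0 = 0)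
    (T : ℝ) (hT : 0 < T) (hFT : F T < 1)
    (m₁ m₂ : StieltjesFunction ℝ) (m : ℝ → ℝ)
    (hm : ∀ t, m t = m₁ t - m₂ t) (hm0 : m 0 = 0)
    (x : ℝ → ℝ) (hxmeas : Measurable x)
    (hxint : IntegrableOn (fun s => x s / (1 - F s)) (Set.Ioc 0 T) F.measure)
    (hx : ∀ t ∈ Set.Icc (0:ℝ) T,
      x t = -(∫ s in Set.Ioc 0 t, x s / (1 - F s) ∂F.measure) + m t) :
    ∀ t ∈ Set.Icc (0:ℝ) T,
      x t = (1 - F t) * ((∫ s in Set.Ioc 0 t, (1 - F s)⁻¹ ∂m₁.measure)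
          - ∫ s in Set.Ioc 0 t, (1 - F s)⁻¹ ∂m₂.measure) :=
  stmt11_general F hFcont T hFT m₁ m₂ m hm hm0 x hxint hx
end

section
/- Let F be continuous nondecreasing with F(T) < 1. For a right-continuous bounded-variation function m with m₀ = 0, the identity (1 − F(t))·∫₀^t dm_s/(1 − F(s)) = m_t − (1 − F(t))·∫₀^t m_s/(1 − F(s))² dF(s) holds for all t ∈ [0,T] (integration by parts for the Doss–Sussmann representation). -/
/-!
Write `g = (1 - F)⁻¹`. A continuous Stieltjes function `F` pushes `dF` on `(a, b]` forward to
Lebesgue measure on `(F a, F b]`, so the chain rule `∫_{(s,t]} g² dF = g t - g s` holds and the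
measure `ν = g² dF` gives `(s, t]` the mass `g t - g s`. Computing the `dm ⊗ ν`-measure of the
triangle `{s < u}` in `(a, b]²` in both orders (Fubini) gives
`∫_{(a,b]} (g b - g s) dm(s) = ∫_{(a,b]} (m u - m a) dν(u)`; the jumps of `m` do not matter
because `ν` has no atoms. Rearranging this gives the identity for each monotone part of `m`.
-/

open MeasureTheory Set

namespace StieltjesFunction

theorem map_measure_restrict_Ioc (F : StieltjesFunction ℝ) (hF : Continuous F) {a b : ℝ}
    (hab : a ≤ b) :
    (F.measure.restrict (Ioc a b)).map F = volume.restrict (Ioc (F a) (F b)) := by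
  have : IsFiniteMeasure (F.measure.restrict (Ioc a b)) := by
    rw [isFiniteMeasure_restrict, F.measure_Ioc]; exact ENNReal.ofReal_ne_top
  refine Measure.ext_of_Iic _ _ fun c ↦ ?_
  rw [Measure.map_apply F.mono.measurable measurableSet_Iic,
    Measure.restrict_apply (measurableSet_Iic.preimage F.mono.measurable),
    Measure.restrict_apply measurableSet_Iic]
  rcases lt_or_ge c (F a) with hc | hc
  · have h₁ : F ⁻¹' Iic c ∩ Ioc a b = ∅ :=
      eq_empty_of_forall_notMem fun s ⟨hs, hsab⟩ ↦ (hc.trans_le (F.mono hsab.1.le)).not_ge hs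
    have h₂ : Iic c ∩ Ioc (F a) (F b) = ∅ :=
      eq_empty_of_forall_notMem fun x ⟨hx, hxab⟩ ↦ (hc.trans hxab.1).not_ge hx
    simp [h₁, h₂]
  set c' := min c (F b)
  -- `d` is the last point of `[a, b]` where `F` is still `≤ c'`; by continuity `F d = c'`.
  obtain ⟨d, ⟨⟨hda, hdb⟩, hFd⟩, hd_max⟩ := (isCompact_Icc.inter_right
    (isClosed_le hF continuous_const)).exists_isGreatest
    (⟨a, ⟨le_rfl, hab⟩, le_min hc (F.mono hab)⟩ : (Icc a b ∩ {s | F s ≤ c'}).Nonempty)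
  have hFd_eq : F d = c' := by
    obtain ⟨e, he, hFe⟩ := intermediate_value_Icc hdb hF.continuousOn
      ⟨hFd, min_le_right _ _⟩
    exact le_antisymm hFd (hFe ▸ F.mono (hd_max ⟨⟨hda.trans he.1, he.2⟩, hFe.le⟩))
  have h₁ : F ⁻¹' Iic c ∩ Ioc a b = Ioc a d := by
    ext s
    exact ⟨fun ⟨hs, hsa, hsb⟩ ↦ ⟨hsa, hd_max ⟨⟨hsa.le, hsb⟩, le_min hs (F.mono hsb)⟩⟩,
      fun ⟨hsa, hsd⟩ ↦ ⟨(F.mono hsd).trans (hFd.trans (min_le_left _ _)), hsa, hsd.trans hdb⟩⟩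
  have h₂ : Iic c ∩ Ioc (F a) (F b) = Ioc (F a) c' := by
    ext x
    simp only [mem_inter_iff, mem_Iic, mem_Ioc, c', le_min_iff]
    tauto
  rw [h₁, h₂, F.measure_Ioc, Real.volume_Ioc, hFd_eq]

theorem setIntegral_comp_Ioc (F : StieltjesFunction ℝ) (hF : Continuous F) {a b : ℝ}
    (hab : a ≤ b) {φ : ℝ → ℝ} (hφ : AEStronglyMeasurable φ (volume.restrict (Ioc (F a) (F b)))) :
    ∫ s in Ioc a b, φ (F s) ∂F.measure = ∫ x in Ioc (F a) (F b), φ x := by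
  rw [← F.map_measure_restrict_Ioc hF hab] at hφ ⊢
  exact (integral_map F.mono.measurable.aemeasurable hφ).symm

theorem setIntegral_inv_one_sub_sq (F : StieltjesFunction ℝ) (hF : Continuous F) {a b : ℝ}
    (hab : a ≤ b) (hFb : F b < 1) :
    ∫ s in Ioc a b, ((1 - F s) ^ 2)⁻¹ ∂F.measure = (1 - F b)⁻¹ - (1 - F a)⁻¹ := by
  have hne : ∀ x ∈ Icc (F a) (F b), 1 - x ≠ 0 := fun x hx ↦ (sub_pos.2 (hx.2.trans_lt hFb)).ne'
  have hcont : ContinuousOn (fun x : ℝ ↦ ((1 - x) ^ 2)⁻¹) (Icc (F a) (F b)) :=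
    ((continuous_const.sub continuous_id).pow 2).continuousOn.inv₀
      fun x hx ↦ pow_ne_zero 2 (hne x hx)
  rw [F.setIntegral_comp_Ioc hF hab ((hcont.mono Ioc_subset_Icc_self).aestronglyMeasurable
      measurableSet_Ioc), ← intervalIntegral.integral_of_le (F.mono hab)]
  refine intervalIntegral.integral_eq_sub_of_hasDerivAt (f := fun x ↦ (1 - x)⁻¹)
    (fun x hx ↦ ?_) ((hcont.mono ?_).intervalIntegrable)
  · rw [uIcc_of_le (F.mono hab)] at hx
    simpa using ((hasDerivAt_id x).const_sub 1).fun_inv (hne x hx)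
  · rw [uIcc_of_le (F.mono hab)]

theorem nullSingletonClass_measure (F : StieltjesFunction ℝ) (hF : Continuous F) :
    NullSingletonClass F.measure where
  measure_singleton a := by
    rw [F.measure_singleton, leftLim_eq_of_tendsto hF.continuousAt.continuousWithinAt, sub_self,
      ENNReal.ofReal_zero]

theorem setIntegral_measureReal_Ioc (f : StieltjesFunction ℝ) (ν : Measure ℝ) [SFinite ν]
    [NullSingletonClass ν] {a b : ℝ} (hν : ν (Ioc a b) ≠ ⊤) :
    ∫ s in Ioc a b, ν.real (Ioc s b) ∂f.measure = ∫ u in Ioc a b, (f u - f a) ∂ν := by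
  have hS : MeasurableSet {p : ℝ × ℝ | p.1 < p.2} := measurableSet_lt measurable_fst measurable_snd
  have hlint : ∫⁻ s in Ioc a b, ν (Ioc s b) ∂f.measure
      = ∫⁻ u in Ioc a b, ENNReal.ofReal (f u - f a) ∂ν := calc
    _ = (f.measure.restrict (Ioc a b)).prod (ν.restrict (Ioc a b)) {p | p.1 < p.2} := by
      rw [Measure.prod_apply hS]
      refine setLIntegral_congr_fun measurableSet_Ioc fun s hs ↦ ?_
      rw [Measure.restrict_apply (hS.preimage measurable_prodMk_left)]
      congr 1
      ext u
      simp only [mem_inter_iff, mem_preimage, mem_ofPred_eq, mem_Ioc]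
      exact ⟨fun h ↦ ⟨h.1, hs.1.trans h.1, h.2⟩, fun h ↦ ⟨h.1, h.2.2⟩⟩
    _ = _ := by
      rw [Measure.prod_apply_symm hS]
      have hleftLim : ∀ᵐ u ∂ν.restrict (Ioc a b), Function.leftLim f u = f u :=
        ae_restrict_of_ae (f.countable_leftLim_ne.measure_zero ν)
      refine lintegral_congr_ae ?_
      filter_upwards [hleftLim, ae_restrict_mem measurableSet_Ioc] with u hu hu_mem
      rw [Measure.restrict_apply (hS.preimage measurable_prodMk_right), ← hu, ← f.measure_Ioo]
      congr 1
      ext s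
      simp only [mem_inter_iff, mem_preimage, mem_ofPred_eq, mem_Ioc, mem_Ioo]
      exact ⟨fun h ↦ ⟨h.2.1, h.1⟩, fun h ↦ ⟨h.2, h.1, h.2.le.trans hu_mem.2⟩⟩
  have hν_meas : Measurable fun s ↦ ν (Ioc s b) :=
    Antitone.measurable fun s t hst ↦ measure_mono (Ioc_subset_Ioc_left hst)
  rw [integral_eq_lintegral_of_nonneg_ae (ae_of_all _ fun _ ↦ measureReal_nonneg)
      hν_meas.ennreal_toReal.aestronglyMeasurable,
    integral_eq_lintegral_of_nonneg_ae
      (ae_restrict_of_forall_mem measurableSet_Ioc fun u hu ↦ sub_nonneg.2 (f.mono hu.1.le))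
      (f.mono.measurable.sub_const _).aestronglyMeasurable, ← hlint]
  congr 1
  refine setLIntegral_congr_fun measurableSet_Ioc fun s hs ↦ ?_
  exact ofReal_measureReal (ne_top_of_le_ne_top hν (measure_mono (Ioc_subset_Ioc_left hs.1.le)))

theorem continuousOn_inv_one_sub_sq (F : StieltjesFunction ℝ) (hF : Continuous F) {a b : ℝ}
    (hFb : F b < 1) : ContinuousOn (fun s ↦ ((1 - F s) ^ 2)⁻¹) (Icc a b) :=
  ((continuous_const.sub hF).pow 2).continuousOn.inv₀
    fun _ hs ↦ pow_ne_zero 2 (sub_pos.2 ((F.mono hs.2).trans_lt hFb)).ne'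

theorem integrableOn_div_one_sub_sq (F f : StieltjesFunction ℝ) (hF : Continuous F) {a b : ℝ}
    (hFb : F b < 1) : IntegrableOn (fun s ↦ f s / (1 - F s) ^ 2) (Ioc a b) F.measure := by
  simp only [div_eq_mul_inv]
  exact (((f.mono.monotoneOn _).integrableOn_isCompact isCompact_Icc).mul_continuousOn
    (F.continuousOn_inv_one_sub_sq hF hFb) isCompact_Icc).mono_set Ioc_subset_Icc_self

theorem setIntegral_inv_one_sub (F f : StieltjesFunction ℝ) (hF : Continuous F) {a b : ℝ}
    (hab : a ≤ b) (hFb : F b < 1) :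
    ∫ s in Ioc a b, (1 - F s)⁻¹ ∂f.measure
      = (1 - F b)⁻¹ * f b - (1 - F a)⁻¹ * f a - ∫ s in Ioc a b, f s / (1 - F s) ^ 2 ∂F.measure := by
  have hg_le : ∀ s ∈ Icc a b, (1 - F s)⁻¹ ≤ (1 - F b)⁻¹ := fun s hs ↦
    inv_anti₀ (sub_pos.2 hFb) (sub_le_sub_left (F.mono hs.2) 1)
  have hg_int : IntegrableOn (fun s ↦ (1 - F s)⁻¹) (Ioc a b) f.measure :=
    ((continuous_const.sub hF).continuousOn.inv₀ fun s hs ↦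
      (sub_pos.2 ((F.mono hs.2).trans_lt hFb)).ne').integrableOn_Icc.mono_set Ioc_subset_Icc_self
  have hw_int : IntegrableOn (fun s ↦ ((1 - F s) ^ 2)⁻¹) (Ioc a b) F.measure :=
    (F.continuousOn_inv_one_sub_sq hF hFb).integrableOn_Icc.mono_set Ioc_subset_Icc_self
  have : NullSingletonClass F.measure := F.nullSingletonClass_measure hF
  set ν := F.measure.withDensity fun s ↦ ENNReal.ofReal ((1 - F s) ^ 2)⁻¹
  have hν : ∀ s ∈ Icc a b, ν (Ioc s b) = ENNReal.ofReal ((1 - F b)⁻¹ - (1 - F s)⁻¹) := by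
    intro s hs
    rw [withDensity_apply _ measurableSet_Ioc, ← ofReal_integral_eq_lintegral_ofReal
      (hw_int.mono_set (Ioc_subset_Ioc_left hs.1)) (ae_of_all _ fun _ ↦ by positivity),
      F.setIntegral_inv_one_sub_sq hF hs.2 hFb]
  have hlhs : ∫ s in Ioc a b, ν.real (Ioc s b) ∂f.measure
      = (1 - F b)⁻¹ * (f b - f a) - ∫ s in Ioc a b, (1 - F s)⁻¹ ∂f.measure := by
    rw [setIntegral_congr_fun measurableSet_Ioc fun s hs ↦ by
        rw [measureReal_def, hν s (Ioc_subset_Icc_self hs), ENNReal.toReal_ofReal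
          (sub_nonneg.2 (hg_le s (Ioc_subset_Icc_self hs)))],
      integral_sub (integrableOn_const (C := (1 - F b)⁻¹) measure_Ioc_lt_top.ne) hg_int,
      setIntegral_const, measureReal_def, f.measure_Ioc,
      ENNReal.toReal_ofReal (sub_nonneg.2 (f.mono hab)), smul_eq_mul, mul_comm]
  have hrhs : ∫ u in Ioc a b, (f u - f a) ∂ν
      = ∫ s in Ioc a b, f s / (1 - F s) ^ 2 ∂F.measure - f a * ((1 - F b)⁻¹ - (1 - F a)⁻¹) := by
    have hdens : Measurable fun s ↦ ENNReal.ofReal ((1 - F s) ^ 2)⁻¹ :=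
      (((continuous_const.sub hF).pow 2).measurable.inv).ennreal_ofReal
    rw [setIntegral_withDensity_eq_setIntegral_toReal_smul hdens
        (ae_of_all _ fun _ ↦ ENNReal.ofReal_lt_top) _ measurableSet_Ioc,
      ← F.setIntegral_inv_one_sub_sq hF hab hFb, ← integral_const_mul,
      ← integral_sub (F.integrableOn_div_one_sub_sq f hF hFb) (hw_int.const_mul (f a))]
    refine setIntegral_congr_fun measurableSet_Ioc fun s _ ↦ ?_
    rw [ENNReal.toReal_ofReal (by positivity), smul_eq_mul, div_eq_mul_inv]
    ring
  have hfubini := f.setIntegral_measureReal_Ioc ν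
    (by rw [hν a ⟨le_rfl, hab⟩]; exact ENNReal.ofReal_ne_top)
  rw [hlhs, hrhs] at hfubini
  linear_combination -hfubini

end StieltjesFunction

theorem stmt12_general (F : StieltjesFunction ℝ) (hFcont : Continuous F)
    (T : ℝ) (hFT : F T < 1)
    (m₁ m₂ : StieltjesFunction ℝ) (m : ℝ → ℝ)
    (hm : ∀ t, m t = m₁ t - m₂ t) (hm0 : m 0 = 0) :
    ∀ t ∈ Set.Icc (0:ℝ) T,
      (1 - F t) * ((∫ s in Set.Ioc 0 t, (1 - F s)⁻¹ ∂m₁.measure)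
          - ∫ s in Set.Ioc 0 t, (1 - F s)⁻¹ ∂m₂.measure)
        = m t - (1 - F t) * ∫ s in Set.Ioc 0 t, m s / (1 - F s) ^ 2 ∂F.measure := by
  rintro t ⟨ht0, htT⟩
  have hFt : F t < 1 := (F.mono htT).trans_lt hFT
  have hsplit : ∫ s in Ioc 0 t, m s / (1 - F s) ^ 2 ∂F.measure
      = (∫ s in Ioc 0 t, m₁ s / (1 - F s) ^ 2 ∂F.measure)
        - ∫ s in Ioc 0 t, m₂ s / (1 - F s) ^ 2 ∂F.measure := by
    rw [← integral_sub (F.integrableOn_div_one_sub_sq m₁ hFcont hFt)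
      (F.integrableOn_div_one_sub_sq m₂ hFcont hFt)]
    simp only [hm, sub_div]
  have hm0' : m₁ 0 - m₂ 0 = 0 := (hm 0).symm.trans hm0
  have hFt_cancel : (1 - F t) * (1 - F t)⁻¹ = 1 := mul_inv_cancel₀ (sub_pos.2 hFt).ne'
  rw [F.setIntegral_inv_one_sub m₁ hFcont ht0 hFt, F.setIntegral_inv_one_sub m₂ hFcont ht0 hFt,
    hsplit, hm t]
  linear_combination (m₁ t - m₂ t) * hFt_cancel - (1 - F t) * (1 - F 0)⁻¹ * hm0'

/-- integration-by-parts identity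
`(1-F t)·∫₀^t dm_s/(1-F s) = m_t - (1-F t)·∫₀^t m_s/(1-F s)² dF(s)` for continuous
nondecreasing `F` with `F T < 1` and a right-continuous bounded-variation `m` with
`m 0 = 0`, written as a difference `m = m₁ - m₂` of Stieltjes functions. -/
theorem stmt12 (F : StieltjesFunction ℝ) (hFcont : Continuous F)
    (T : ℝ) (hT : 0 < T) (hFT : F T < 1)
    (m₁ m₂ : StieltjesFunction ℝ) (m : ℝ → ℝ)
    (hm : ∀ t, m t = m₁ t - m₂ t) (hm0 : m 0 = 0) :
    ∀ t ∈ Set.Icc (0:ℝ) T,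
      (1 - F t) * ((∫ s in Set.Ioc 0 t, (1 - F s)⁻¹ ∂m₁.measure)
          - ∫ s in Set.Ioc 0 t, (1 - F s)⁻¹ ∂m₂.measure)
        = m t - (1 - F t) * ∫ s in Set.Ioc 0 t, m s / (1 - F s) ^ 2 ∂F.measure :=
  stmt12_general F hFcont T hFT m₁ m₂ m hm hm0
end
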